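/- Let x : [n]×[n] → ℝ with ∑ x_{ij} = 0 and ∑ x_{ij}² = n², let π be a uniform random permutation of [n]×[n], and X_{ij} = x_{π(i,j)}. Fix I ⊆ [n] and a unit vector u ∈ S^{n-1}_ℂ with ℓ¹-norm |u|_1 ≤ √n. Then E |X_{|I} u|² ≥ #I - (#I/(n²-1)) |u|₁² ≥ #I/3, where X_{|I} is the submatrix of rows indexed by I. -/

import Mathlib

/-! The entries of a uniformly shuffled matrix are exchangeable, so `E[X_a X_b]` depends only on
whether `a = b`; since the entries sum to zero, `E[X_a X_b] = -1/(n² - 1)` for `a ≠ b`. Expanding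
`|∑_j X_{ij} u_j|²` row by row gives exactly `#I (1 - (|∑_j u_j|² - 1)/(n² - 1))`, and
`|∑_j u_j| ≤ |u|₁ ≤ √n` turns this into both bounds. -/

open Finset ComplexConjugate

namespace Equiv.Perm

variable {α : Type*} [DecidableEq α]

theorem exists_apply_eq_and_apply_eq {a b a' b' : α} (hab : a ≠ b) (h' : a' ≠ b') :
    ∃ τ : Perm α, τ a = a' ∧ τ b = b' := by
  have hne : a' ≠ swap a a' b := fun h =>
    hab ((swap a a').injective ((swap_apply_left a a').trans h))
  refine ⟨(swap a a').trans (swap (swap a a' b) b'), ?_, ?_⟩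
  · simp only [trans_apply, swap_apply_left]
    exact swap_apply_of_ne_of_ne hne h'
  · simp only [trans_apply, swap_apply_left]

variable [Fintype α] {M : Type*} [AddCommMonoid M]

theorem sum_apply_eq_sum_apply (f : α → M) (a a' : α) :
    ∑ π : Perm α, f (π a) = ∑ π : Perm α, f (π a') :=
  (Equiv.sum_comp (Equiv.mulRight (swap a a')) _).symm.trans
    (Finset.sum_congr rfl fun π _ => by simp [mul_apply])

theorem sum_apply_apply_eq_sum_apply_apply (f : α → α → M) {a b a' b' : α}
    (hab : a ≠ b) (h' : a' ≠ b') :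
    ∑ π : Perm α, f (π a) (π b) = ∑ π : Perm α, f (π a') (π b') := by
  obtain ⟨τ, rfl, rfl⟩ := exists_apply_eq_and_apply_eq hab h'
  exact (Equiv.sum_comp (Equiv.mulRight τ) _).symm

theorem card_nsmul_sum_apply (f : α → M) (a : α) :
    Fintype.card α • ∑ π : Perm α, f (π a) = Fintype.card (Perm α) • ∑ p, f p :=
  calc Fintype.card α • ∑ π : Perm α, f (π a)
      = ∑ a' : α, ∑ π : Perm α, f (π a') := by
        simp [sum_apply_eq_sum_apply f _ a]
    _ = ∑ _π : Perm α, ∑ p, f p := by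
        rw [Finset.sum_comm]
        exact Finset.sum_congr rfl fun π _ => Equiv.sum_comp π f
    _ = Fintype.card (Perm α) • ∑ p, f p := by simp

theorem card_sub_one_mul_sum_apply_mul_apply {R : Type*} [CommRing R] (x : α → R)
    (h0 : ∑ p, x p = 0) {a b : α} (hab : a ≠ b) :
    ((Fintype.card α : R) - 1) * ∑ π : Perm α, x (π a) * x (π b)
      = -∑ π : Perm α, x (π a) ^ 2 := by
  have hzero : ∑ b' : α, ∑ π : Perm α, x (π a) * x (π b') = 0 := by
    rw [Finset.sum_comm]
    refine Finset.sum_eq_zero fun π _ => ?_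
    rw [← Finset.mul_sum, Equiv.sum_comp π x, h0, mul_zero]
  rw [← Finset.add_sum_erase _ _ (Finset.mem_univ a),
    Finset.sum_congr rfl fun b' hb' => sum_apply_apply_eq_sum_apply_apply
      (fun p q => x p * x q) (Ne.symm (Finset.ne_of_mem_erase hb')) hab,
    Finset.sum_const, Finset.card_erase_of_mem (Finset.mem_univ a), Finset.card_univ,
    nsmul_eq_mul, Nat.cast_pred (Fintype.card_pos_iff.mpr ⟨a⟩)] at hzero
  simp only [← pow_two] at hzero
  linear_combination hzero

theorem sum_apply_mul_apply (x : α → ℝ) (h0 : ∑ p, x p = 0)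
    (h2 : ∑ p, x p ^ 2 = Fintype.card α) (a b : α) :
    ∑ π : Perm α, x (π a) * x (π b)
      = Fintype.card (Perm α) * if a = b then 1 else -1 / ((Fintype.card α : ℝ) - 1) := by
  have hα : (0 : ℝ) < Fintype.card α := by exact_mod_cast Fintype.card_pos_iff.mpr ⟨a⟩
  have hdiag : ∑ π : Perm α, x (π a) ^ 2 = Fintype.card (Perm α) := by
    have := card_nsmul_sum_apply (fun p => x p ^ 2) a
    rw [nsmul_eq_mul, nsmul_eq_mul, h2] at this
    exact mul_left_cancel₀ hα.ne' (this.trans (mul_comm _ _))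
  split_ifs with hab
  · subst hab
    simpa [← pow_two] using hdiag
  · have hα1 : (Fintype.card α : ℝ) - 1 ≠ 0 := by
      have : 1 < Fintype.card α := Fintype.one_lt_card_iff.mpr ⟨a, b, hab⟩
      exact sub_ne_zero.mpr (by exact_mod_cast this.ne')
    have := card_sub_one_mul_sum_apply_mul_apply x h0 hab
    rw [hdiag] at this
    field_simp
    linear_combination this

end Equiv.Perm

theorem Finset.sum_sum_ite_eq_mul {ι R : Type*} [Fintype ι] [DecidableEq ι] [CommRing R]
    (d e : R) (w : ι → ι → R) :
    ∑ j, ∑ k, (if j = k then d else e) * w j k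
      = e * ∑ j, ∑ k, w j k + (d - e) * ∑ j, w j j := by
  have hsplit : ∀ j k, (if j = k then d else e) * w j k
      = e * w j k + if j = k then (d - e) * w j k else 0 := fun j k => by
    split_ifs <;> ring
  simp only [hsplit, Finset.sum_add_distrib, Finset.sum_ite_eq, Finset.mem_univ, if_true,
    ← Finset.mul_sum]

namespace Complex

variable {ι : Type*} [Fintype ι]

theorem sq_norm_sum_ofReal_mul (c : ι → ℝ) (u : ι → ℂ) :
    ‖∑ j, (c j : ℂ) * u j‖ ^ 2 = ∑ j, ∑ k, c j * c k * (u j * conj (u k)).re := by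
  rw [Complex.sq_norm, ← ofReal_re (normSq _), ← mul_conj, map_sum, sum_mul_sum, re_sum]
  refine Finset.sum_congr rfl fun j _ => ?_
  rw [re_sum]
  refine Finset.sum_congr rfl fun k _ => ?_
  rw [map_mul, conj_ofReal, ← re_ofReal_mul]
  push_cast
  ring_nf

theorem sq_norm_sum (u : ι → ℂ) :
    ‖∑ j, u j‖ ^ 2 = ∑ j, ∑ k, (u j * conj (u k)).re := by
  simpa using sq_norm_sum_ofReal_mul (fun _ => 1) u

theorem re_mul_conj_self (z : ℂ) : (z * conj z).re = ‖z‖ ^ 2 := by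
  rw [mul_conj, ofReal_re, normSq_eq_norm_sq]

end Complex

theorem Equiv.Perm.sum_sq_norm_sum_apply_mul {α κ : Type*} [Fintype α] [DecidableEq α]
    [Fintype κ] (x : α → ℝ) (h0 : ∑ p, x p = 0) (h2 : ∑ p, x p ^ 2 = Fintype.card α)
    {e : κ → α} (he : Function.Injective e) (u : κ → ℂ) :
    ∑ π : Perm α, ‖∑ j, (x (π (e j)) : ℂ) * u j‖ ^ 2
      = Fintype.card (Perm α) * (∑ j, ‖u j‖ ^ 2
          - (‖∑ j, u j‖ ^ 2 - ∑ j, ‖u j‖ ^ 2) / ((Fintype.card α : ℝ) - 1)) := by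
  classical
  calc ∑ π : Perm α, ‖∑ j, (x (π (e j)) : ℂ) * u j‖ ^ 2
      = ∑ j, ∑ k, (∑ π : Perm α, x (π (e j)) * x (π (e k))) * (u j * conj (u k)).re := by
        simp only [Complex.sq_norm_sum_ofReal_mul, Finset.sum_mul]
        rw [Finset.sum_comm]
        exact Finset.sum_congr rfl fun j _ => Finset.sum_comm
    _ = Fintype.card (Perm α) * ∑ j, ∑ k,
          (if j = k then 1 else -1 / ((Fintype.card α : ℝ) - 1)) * (u j * conj (u k)).re := by
        simp only [sum_apply_mul_apply x h0 h2, he.eq_iff, mul_assoc, Finset.mul_sum]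
    _ = _ := by
        rw [Finset.sum_sum_ite_eq_mul, ← Complex.sq_norm_sum]
        simp only [Complex.re_mul_conj_self]
        ring

/-- Second moment lower bound for the image of a unit vector with small ℓ¹-norm under a
submatrix of rows of the shuffled matrix: `E |X_{|I} u|² ≥ #I - (#I/(n²-1)) |u|₁² ≥ #I/3`. -/
theorem shuffled_submatrix_second_moment (n : ℕ) (hn : 2 ≤ n)
    (x : Fin n × Fin n → ℝ)
    (h0 : ∑ p : Fin n × Fin n, x p = 0)
    (h2 : ∑ p : Fin n × Fin n, (x p) ^ 2 = (n : ℝ) ^ 2)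
    (I : Finset (Fin n)) (u : Fin n → ℂ)
    (hu : ∑ j, ‖u j‖ ^ 2 = 1) (hu1 : ∑ j, ‖u j‖ ≤ Real.sqrt n) :
    (I.card : ℝ) - ((I.card : ℝ) / ((n : ℝ) ^ 2 - 1)) * (∑ j, ‖u j‖) ^ 2 ≤
      (∑ π : Equiv.Perm (Fin n × Fin n), ∑ i ∈ I, ‖∑ j, ((x (π (i, j)) : ℝ) : ℂ) * u j‖ ^ 2) /
        (Fintype.card (Equiv.Perm (Fin n × Fin n)) : ℝ) ∧
    (I.card : ℝ) / 3 ≤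
      (I.card : ℝ) - ((I.card : ℝ) / ((n : ℝ) ^ 2 - 1)) * (∑ j, ‖u j‖) ^ 2 := by
  have hn' : (2 : ℝ) ≤ n := by exact_mod_cast hn
  have hN : (Fintype.card (Fin n × Fin n) : ℝ) = (n : ℝ) ^ 2 := by simp [sq]
  have hK : (0 : ℝ) < Fintype.card (Equiv.Perm (Fin n × Fin n)) := by
    exact_mod_cast Fintype.card_pos
  have hrow := fun i => Equiv.Perm.sum_sq_norm_sum_apply_mul x h0 (hN ▸ h2)
    (Prod.mk_right_injective i) u
  rw [Finset.sum_comm, Finset.sum_congr rfl fun i _ => hrow i, Finset.sum_const, nsmul_eq_mul,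
    mul_left_comm (I.card : ℝ), mul_div_cancel_left₀ _ hK.ne', hu, hN]
  set L := ∑ j, ‖u j‖
  have hsum : ‖∑ j, u j‖ ^ 2 ≤ L ^ 2 := pow_le_pow_left₀ (norm_nonneg _) (norm_sum_le _ _) 2
  have hL : L ^ 2 ≤ n := by
    calc L ^ 2 ≤ Real.sqrt n ^ 2 := pow_le_pow_left₀ (sum_nonneg fun _ _ => norm_nonneg _) hu1 2
      _ = n := Real.sq_sqrt n.cast_nonneg
  have hNN : (0 : ℝ) < (n : ℝ) ^ 2 - 1 := by nlinarith
  have hI : (0 : ℝ) ≤ I.card := I.card.cast_nonneg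
  rw [div_mul_eq_mul_div, mul_div_assoc]
  constructor
  · have : (‖∑ j, u j‖ ^ 2 - 1) / ((n : ℝ) ^ 2 - 1) ≤ L ^ 2 / ((n : ℝ) ^ 2 - 1) := by
      gcongr; linarith
    linarith [mul_le_mul_of_nonneg_left this hI]
  · have : L ^ 2 / ((n : ℝ) ^ 2 - 1) ≤ 2 / 3 := by
      rw [div_le_iff₀ hNN]; nlinarith
    linarith [mul_le_mul_of_nonneg_left this hI]
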